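/- Let n ≥ 2 and let {A(t)}_{t≥0} be a sequence of column-stochastic n×n matrices, each of out-degree form, that is strongly aperiodic and has the directed infinite flow property. If the associated sequence {ℓ_q} satisfies Σ_{q=1}^∞ 1/n^{ℓ_q} = ∞, then for every s ≥ 0 there exist vectors φ(t) ∈ ℝⁿ (for t ≥ s) such that for all i, j ∈ [n], lim_{t→∞} |[A(t:s)]_{ij} − φ_i(t)| = 0. -/

import Mathlib

open Finset MeasureTheory

/-- `A_{S S̄} = ∑_{i ∈ S, j ∉ S} A i j`. -/
def flowSum {n : ℕ} (A : Matrix (Fin n) (Fin n) ℝ) (S : Finset (Fin n)) : ℝ :=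
  ∑ i ∈ S, ∑ j ∈ Sᶜ, A i j

/-- `S` is a nontrivial subset of `[n]`. -/
def NontrivialSubset {n : ℕ} (S : Finset (Fin n)) : Prop :=
  S.Nonempty ∧ S ≠ Finset.univ

/-- Directed infinite flow property: for every nontrivial `S`, `∑_t A_{S S̄}(t) = ∞`. -/
def DirectedInfiniteFlow {n : ℕ} (A : ℕ → Matrix (Fin n) (Fin n) ℝ) : Prop :=
  ∀ S : Finset (Fin n), NontrivialSubset S →
    Filter.Tendsto (fun T => ∑ t ∈ Finset.range T, flowSum (A t) S)
      Filter.atTop Filter.atTop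

/-- The backward product `A(t:s) = A(t) A(t-1) ⋯ A(s)`. -/
def matProd {n : ℕ} (A : ℕ → Matrix (Fin n) (Fin n) ℝ) (t s : ℕ) :
    Matrix (Fin n) (Fin n) ℝ :=
  (((List.range (t + 1 - s)).map fun k => A (t - k))).prod

/-- Row-stochastic nonnegative matrix. -/
def RowStochastic {n : ℕ} (A : Matrix (Fin n) (Fin n) ℝ) : Prop :=
  (∀ i j, 0 ≤ A i j) ∧ ∀ i, ∑ j, A i j = 1

/-- Column-stochastic nonnegative matrix. -/
def ColStochastic {n : ℕ} (A : Matrix (Fin n) (Fin n) ℝ) : Prop :=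
  (∀ i j, 0 ≤ A i j) ∧ ∀ j, ∑ i, A i j = 1

/-- `W` is the degree-normalized adjacency matrix of a digraph with all self-loops:
`W i j = 1 / (out-degree of j)` if there is an edge from `j` to `i`, else `0`. -/
def OutDegreeForm {n : ℕ} (W : Matrix (Fin n) (Fin n) ℝ) : Prop :=
  ∃ N : Fin n → Finset (Fin n), (∀ j, j ∈ N j) ∧
    ∀ i j, W i j = if i ∈ N j then (1 : ℝ) / (N j).card else 0

/-- Strong aperiodicity of a sequence of matrices. -/
def StronglyAperiodic {n : ℕ} (A : ℕ → Matrix (Fin n) (Fin n) ℝ) : Prop :=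
  ∃ γ : ℝ, 0 < γ ∧ ∀ t i, γ ≤ A t i i

/-- The times `k_q`: `k_0 = 0` and `k_q` is the least `t' > k_{q-1}` with
nonzero flow `∑_{t=k_{q-1}}^{t'-1} A_{S S̄}(t) > 0` across every nontrivial cut. -/
noncomputable def kSeq {n : ℕ} (A : ℕ → Matrix (Fin n) (Fin n) ℝ) : ℕ → ℕ
  | 0 => 0
  | q + 1 => sInf {t' : ℕ | kSeq A q < t' ∧ ∀ S : Finset (Fin n), NontrivialSubset S →
      0 < ∑ t ∈ Finset.Ico (kSeq A q) t', flowSum (A t) S}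

/-- `ℓ_q = k_{qn} - k_{(q-1)n}`. -/
noncomputable def ellSeq {n : ℕ} (A : ℕ → Matrix (Fin n) (Fin n) ℝ) (q : ℕ) : ℕ :=
  kSeq A (q * n) - kSeq A ((q - 1) * n)

/-- The index set `Q_{t,s} = {q ≥ 1 : s ≤ k_{(q-1)n}, k_{qn} ≤ t}` (as a `Finset`). -/
noncomputable def QSet {n : ℕ} (A : ℕ → Matrix (Fin n) (Fin n) ℝ) (t s : ℕ) :
    Finset ℕ :=
  (Finset.Icc 1 t).filter fun q => s ≤ kSeq A ((q - 1) * n) ∧ kSeq A (q * n) ≤ t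

/-- `Λ_{t,s} = ∏_{q ∈ Q_{t,s}} (1 - 1/n^{ℓ_q})`. -/
noncomputable def Lam {n : ℕ} (A : ℕ → Matrix (Fin n) (Fin n) ℝ) (t s : ℕ) : ℝ :=
  ∏ q ∈ QSet A t s, (1 - 1 / (n : ℝ) ^ (ellSeq A q))

/-- Push-sum iterates: `u(0) = u0`, `u(t+1) = W(t) u(t)`. -/
def pushIter {n : ℕ} (W : ℕ → Matrix (Fin n) (Fin n) ℝ) (u0 : Fin n → ℝ) : ℕ → Fin n → ℝ
  | 0 => u0
  | t + 1 => (W t).mulVec (pushIter W u0 t)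

/-- A nonnegative matrix is irreducible if the digraph with an edge from `j` to `i`
whenever `A i j > 0` is strongly connected. -/
def IrreducibleMat {n : ℕ} (A : Matrix (Fin n) (Fin n) ℝ) : Prop :=
  ∀ i j : Fin n, Relation.ReflTransGen (fun a b => 0 < A b a) i j

/-!
Take `φ_i(t) = [A(t:s)]_{ii}`; then `[A(t:s)]_{ij} - φ_i(t)` is the `i`-th entry of `A(t:s) d`
for `d = e_j - e_i`, a vector with zero sum. Column-stochastic matrices do not increase the
`ℓ¹`-norm of such vectors, and over the `q`-th block `[k_{(q-1)n}, k_{qn})` the norm shrinks by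
the factor `1 - 1/n^{ℓ_q}`: in each of the `n` flow intervals the positive support of every column
of the block product gains a node (positive diagonals keep old nodes, positive flow adds one), so
the block product is entrywise positive, with entries at least `1/n^{ℓ_q}` because every positive
entry of an out-degree-form matrix is at least `1/n`; Dobrushin's bound then applies. As
`∑ 1/n^{ℓ_q} = ∞`, the product of these factors tends to zero.
-/

open Matrix

section MatProd

variable {n : ℕ} (A : ℕ → Matrix (Fin n) (Fin n) ℝ)

lemma matProd_of_lt {t s : ℕ} (h : t < s) : matProd A t s = 1 := by
  simp [matProd, Nat.sub_eq_zero_of_le h]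

lemma matProd_self (t : ℕ) : matProd A t t = A t := by
  simp [matProd]

lemma matProd_succ {t s : ℕ} (h : s ≤ t + 1) :
    matProd A (t + 1) s = A (t + 1) * matProd A t s := by
  rw [matProd, show t + 1 + 1 - s = (t + 1 - s) + 1 by omega, List.range_succ_eq_map]
  simp [matProd, Function.comp_def]

lemma matProd_split {s a b : ℕ} (hsa : s < a) (hab : a ≤ b + 1) :
    matProd A b s = matProd A b a * matProd A (a - 1) s := by
  induction b, show a - 1 ≤ b by omega using Nat.le_induction with
  | base => rw [matProd_of_lt A (by omega : a - 1 < a), Matrix.one_mul]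
  | succ b hb ih =>
    rw [matProd_succ A (by omega), matProd_succ A (by omega), ih (by omega), Matrix.mul_assoc]

lemma pushIter_shift_succ (m : ℕ) (u : Fin n → ℝ) (t : ℕ) :
    pushIter (fun k => A (m + k)) u (t + 1) = matProd A (m + t) m *ᵥ u := by
  induction t with
  | zero => simp [pushIter, matProd_self]
  | succ t ih =>
    rw [pushIter, ih, ← add_assoc, matProd_succ A (by omega), Matrix.mulVec_mulVec]

end MatProd

section ColStochastic

variable {n : ℕ} {M P : Matrix (Fin n) (Fin n) ℝ}

lemma ColStochastic.sum_mulVec (hM : ColStochastic M) (v : Fin n → ℝ) :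
    ∑ i, (M *ᵥ v) i = ∑ j, v j := by
  simp only [Matrix.mulVec, dotProduct]
  rw [Finset.sum_comm]
  simp [← Finset.sum_mul, hM.2]

lemma ColStochastic.mul (hM : ColStochastic M) (hP : ColStochastic P) :
    ColStochastic (M * P) := by
  refine ⟨fun i j => ?_, fun j => ?_⟩
  · rw [Matrix.mul_apply]
    exact Finset.sum_nonneg fun k _ => mul_nonneg (hM.1 i k) (hP.1 k j)
  · simpa [Matrix.mulVec, dotProduct, Matrix.mul_apply, hP.2 j] using hM.sum_mulVec (P.col j)

lemma colStochastic_one : ColStochastic (1 : Matrix (Fin n) (Fin n) ℝ) :=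
  ⟨fun i j => by by_cases h : i = j <;> simp [Matrix.one_apply, h],
    fun j => by simp [Matrix.one_apply]⟩

lemma colStochastic_matProd {A : ℕ → Matrix (Fin n) (Fin n) ℝ} (hA : ∀ t, ColStochastic (A t))
    (t s : ℕ) : ColStochastic (matProd A t s) := by
  rcases lt_or_ge t s with h | h
  · exact matProd_of_lt A h ▸ colStochastic_one
  induction t, h using Nat.le_induction with
  | base => exact matProd_self A s ▸ hA s
  | succ t h ih => exact matProd_succ A (t := t) (s := s) (by omega) ▸ (hA (t + 1)).mul ih

/-- Dobrushin's contraction: subtracting `ε` from every entry does not change `M *ᵥ v`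
when `∑ v = 0`, and leaves a matrix with nonnegative entries and column sums `1 - n ε`. -/
lemma ColStochastic.sum_abs_mulVec_le (hM : ColStochastic M) {ε : ℝ} (hε : ∀ i j, ε ≤ M i j)
    {v : Fin n → ℝ} (hv : ∑ j, v j = 0) :
    ∑ i, |(M *ᵥ v) i| ≤ (1 - n * ε) * ∑ j, |v j| := by
  have hshift : ∀ i, (M *ᵥ v) i = ∑ j, (M i j - ε) * v j := fun i => by
    simp [Matrix.mulVec, dotProduct, sub_mul, Finset.sum_sub_distrib, ← Finset.mul_sum, hv]
  calc ∑ i, |(M *ᵥ v) i| ≤ ∑ i, ∑ j, (M i j - ε) * |v j| := by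
        refine Finset.sum_le_sum fun i _ => ?_
        rw [hshift]
        refine (Finset.abs_sum_le_sum_abs _ _).trans_eq (Finset.sum_congr rfl fun j _ => ?_)
        rw [abs_mul, abs_of_nonneg (sub_nonneg.2 (hε i j))]
    _ = (1 - n * ε) * ∑ j, |v j| := by
        rw [Finset.sum_comm, Finset.mul_sum]
        simp [← Finset.sum_mul, Finset.sum_sub_distrib, hM.2]

end ColStochastic

section OutDegreeForm

variable {n : ℕ} {W : Matrix (Fin n) (Fin n) ℝ}

lemma OutDegreeForm.diag_pos (hW : OutDegreeForm W) (i : Fin n) : 0 < W i i := by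
  obtain ⟨N, hself, hW⟩ := hW
  have : 0 < (N i).card := Finset.card_pos.2 ⟨i, hself i⟩
  rw [hW, if_pos (hself i)]
  positivity

lemma OutDegreeForm.one_div_le_of_pos (hW : OutDegreeForm W) {i j : Fin n} (h : 0 < W i j) :
    1 / (n : ℝ) ≤ W i j := by
  obtain ⟨N, hself, hW⟩ := hW
  rw [hW] at h ⊢
  split_ifs at h ⊢ with hij
  · have hcard : (N j).card ≤ n := by simpa using Finset.card_le_univ (N j)
    have : 0 < (N j).card := Finset.card_pos.2 ⟨j, hself j⟩
    gcongr
  · exact absurd h (lt_irrefl 0)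

end OutDegreeForm

section Trajectory

variable {n : ℕ}

noncomputable def posSupport (v : Fin n → ℝ) : Finset (Fin n) :=
  Finset.univ.filter fun i => 0 < v i

@[simp]
lemma mem_posSupport {v : Fin n → ℝ} {i : Fin n} : i ∈ posSupport v ↔ 0 < v i := by
  simp [posSupport]

lemma mulVec_nonneg {M : Matrix (Fin n) (Fin n) ℝ} (hM : ∀ i j, 0 ≤ M i j) {v : Fin n → ℝ}
    (hv : 0 ≤ v) : 0 ≤ M *ᵥ v := fun i =>
  show 0 ≤ ∑ j, M i j * v j from Finset.sum_nonneg fun j _ => mul_nonneg (hM i j) (hv j)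

lemma mulVec_pos {M : Matrix (Fin n) (Fin n) ℝ} (hM : ∀ i j, 0 ≤ M i j) {v : Fin n → ℝ}
    (hv : 0 ≤ v) {i k : Fin n} (hik : 0 < M i k) (hk : 0 < v k) : 0 < (M *ᵥ v) i :=
  (mul_pos hik hk).trans_le <| Finset.single_le_sum (f := fun j => M i j * v j)
    (fun j _ => mul_nonneg (hM i j) (hv j)) (Finset.mem_univ k)

lemma mul_le_mulVec_of_pos {M : Matrix (Fin n) (Fin n) ℝ} (hM : ∀ i j, 0 ≤ M i j)
    {v : Fin n → ℝ} (hv : 0 ≤ v) {δ ε : ℝ} (hδ : ∀ i j, 0 < M i j → δ ≤ M i j)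
    (hε : ∀ j, 0 < v j → ε ≤ v j) (hε0 : 0 ≤ ε) {i : Fin n} (hi : 0 < (M *ᵥ v) i) :
    δ * ε ≤ (M *ᵥ v) i := by
  obtain ⟨k, -, hk⟩ := Finset.exists_lt_of_sum_lt (f := fun _ => (0 : ℝ))
    (g := fun j => M i j * v j) (by simpa [Matrix.mulVec, dotProduct] using hi)
  have hMk : 0 < M i k := pos_of_mul_pos_left hk (hv k)
  have hvk : 0 < v k := pos_of_mul_pos_right hk (hM i k)
  exact (mul_le_mul (hδ i k hMk) (hε k hvk) hε0 hMk.le).trans <|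
    Finset.single_le_sum (f := fun j => M i j * v j)
      (fun j _ => mul_nonneg (hM i j) (hv j)) (Finset.mem_univ k)

variable {A : ℕ → Matrix (Fin n) (Fin n) ℝ} {u : ℕ → Fin n → ℝ} {a : ℕ}

lemma trajectory_nonneg (hA : ∀ t i j, 0 ≤ A t i j)
    (hu : ∀ t, a ≤ t → u (t + 1) = A t *ᵥ u t) (hu₀ : 0 ≤ u a) {t : ℕ} (ht : a ≤ t) : 0 ≤ u t := by
  induction t, ht using Nat.le_induction with
  | base => exact hu₀
  | succ t ht ih => exact hu t ht ▸ mulVec_nonneg (hA t) ih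

lemma posSupport_trajectory_mono (hA : ∀ t i j, 0 ≤ A t i j)
    (hu : ∀ t, a ≤ t → u (t + 1) = A t *ᵥ u t) (hu₀ : 0 ≤ u a)
    (hdiag : ∀ t i, 0 < A t i i) {t₁ t₂ : ℕ} (h₁ : a ≤ t₁)
    (h₁₂ : t₁ ≤ t₂) : posSupport (u t₁) ⊆ posSupport (u t₂) := by
  induction t₂, h₁₂ using Nat.le_induction with
  | base => exact subset_rfl
  | succ t h ih =>
    refine ih.trans fun i hi => ?_
    rw [mem_posSupport, hu t (h₁.trans h)] at *
    exact mulVec_pos (hA t) (trajectory_nonneg hA hu hu₀ (h₁.trans h)) (hdiag t i) hi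

lemma posSupport_trajectory_ssubset (hA : ∀ t i j, 0 ≤ A t i j)
    (hu : ∀ t, a ≤ t → u (t + 1) = A t *ᵥ u t) (hu₀ : 0 ≤ u a)
    (hdiag : ∀ t i, 0 < A t i i) {t₁ t₂ : ℕ} (h₁ : a ≤ t₁)
    (hflow : 0 < ∑ t ∈ Finset.Ico t₁ t₂, flowSum (A t) (posSupport (u t₁))ᶜ) :
    posSupport (u t₁) ⊂ posSupport (u t₂) := by
  obtain ⟨t, ht, hRt⟩ := Finset.exists_lt_of_sum_lt (f := fun _ => (0 : ℝ)) (by simpa using hflow)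
  obtain ⟨i, hi, hRti⟩ := Finset.exists_lt_of_sum_lt (f := fun _ => (0 : ℝ))
    (by simpa [flowSum] using hRt)
  obtain ⟨k, hk, hik⟩ := Finset.exists_lt_of_sum_lt (f := fun _ => (0 : ℝ))
    (by simpa using hRti)
  rw [Finset.mem_Ico] at ht
  have hkt : 0 < u t k := mem_posSupport.1 (posSupport_trajectory_mono hA hu hu₀ hdiag h₁ ht.1 hk)
  have hit : i ∈ posSupport (u (t + 1)) := by
    rw [mem_posSupport, hu t (h₁.trans ht.1)]
    exact mulVec_pos (hA t) (trajectory_nonneg hA hu hu₀ (h₁.trans ht.1)) hik hkt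
  refine (Finset.ssubset_iff_of_subset
    (posSupport_trajectory_mono hA hu hu₀ hdiag h₁ (by omega))).2 ⟨i, ?_, Finset.mem_compl.1 hi⟩
  exact posSupport_trajectory_mono hA hu hu₀ hdiag (h₁.trans (by omega)) ht.2 hit

lemma min_le_card_posSupport_trajectory (hA : ∀ t i j, 0 ≤ A t i j)
    (hu : ∀ t, a ≤ t → u (t + 1) = A t *ᵥ u t) (hu₀ : 0 ≤ u a) (hdiag : ∀ t i, 0 < A t i i)
    {c : ℕ → ℕ} (hc : Monotone c) (ha : a ≤ c 0)
    (hflow : ∀ r S, NontrivialSubset S → 0 < ∑ t ∈ Finset.Ico (c r) (c (r + 1)), flowSum (A t) S)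
    (hne : (posSupport (u (c 0))).Nonempty) (r : ℕ) :
    min n (r + 1) ≤ (posSupport (u (c r))).card := by
  induction r with
  | zero => exact (min_le_right _ _).trans (Finset.card_pos.2 hne)
  | succ r ih =>
    have hac : a ≤ c r := ha.trans (hc (Nat.zero_le r))
    have hmono := posSupport_trajectory_mono hA hu hu₀ hdiag hac (hc (Nat.le_succ r))
    by_cases hR : posSupport (u (c r)) = Finset.univ
    · rw [hR, Finset.univ_subset_iff] at hmono
      simp [hmono]
    · have hS : NontrivialSubset (posSupport (u (c r)))ᶜ := by
        refine ⟨Finset.nonempty_iff_ne_empty.2 (by rwa [Ne, Finset.compl_eq_empty_iff]),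
          fun h => ?_⟩
        rw [Finset.compl_eq_univ_iff] at h
        have := posSupport_trajectory_mono hA hu hu₀ hdiag ha (hc (Nat.zero_le r))
        simp_all
      have := Finset.card_lt_card
        (posSupport_trajectory_ssubset hA hu hu₀ hdiag hac (hflow r _ hS))
      omega

lemma pow_le_trajectory_of_pos (hA : ∀ t i j, 0 ≤ A t i j)
    (hu : ∀ t, a ≤ t → u (t + 1) = A t *ᵥ u t) (hu₀ : 0 ≤ u a) {δ : ℝ} (hδ₀ : 0 ≤ δ)
    (hδ : ∀ t i j, 0 < A t i j → δ ≤ A t i j) (hu₁ : ∀ i, 0 < u a i → 1 ≤ u a i) {t : ℕ}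
    (ht : a ≤ t) : ∀ i, 0 < u t i → δ ^ (t - a) ≤ u t i := by
  induction t, ht using Nat.le_induction with
  | base => simpa using hu₁
  | succ t ht ih =>
    rw [hu t ht, show t + 1 - a = t - a + 1 by omega, pow_succ']
    exact fun i => mul_le_mulVec_of_pos (hA t) (trajectory_nonneg hA hu hu₀ ht) (hδ t) ih
      (pow_nonneg hδ₀ _)

end Trajectory

section FlowTimes

variable {n : ℕ} {A : ℕ → Matrix (Fin n) (Fin n) ℝ}

lemma eventually_flowSum_Ico_pos (hflow : DirectedInfiniteFlow A) (k : ℕ) :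
    ∀ᶠ T in Filter.atTop, ∀ S, NontrivialSubset S →
      0 < ∑ t ∈ Finset.Ico k T, flowSum (A t) S := by
  refine Filter.eventually_all.2 fun S => Filter.eventually_imp_distrib_left.2 fun hS => ?_
  filter_upwards [(hflow S hS).eventually_gt_atTop (∑ t ∈ Finset.range k, flowSum (A t) S),
    Filter.eventually_ge_atTop k] with T hT hkT
  rw [Finset.sum_Ico_eq_sub _ hkT]
  linarith

lemma kSeq_lt_succ_and_flowSum_pos (hflow : DirectedInfiniteFlow A) (q : ℕ) :
    kSeq A q < kSeq A (q + 1) ∧ ∀ S, NontrivialSubset S →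
      0 < ∑ t ∈ Finset.Ico (kSeq A q) (kSeq A (q + 1)), flowSum (A t) S := by
  have hne : {T | kSeq A q < T ∧ ∀ S, NontrivialSubset S →
      0 < ∑ t ∈ Finset.Ico (kSeq A q) T, flowSum (A t) S}.Nonempty :=
    ((eventually_flowSum_Ico_pos hflow _).and (Filter.eventually_gt_atTop _)).exists.imp
      fun _ h => ⟨h.2, h.1⟩
  exact Nat.sInf_mem hne

lemma kSeq_strictMono (hflow : DirectedInfiniteFlow A) : StrictMono (kSeq A) :=
  strictMono_nat_of_lt_succ fun q => (kSeq_lt_succ_and_flowSum_pos hflow q).1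

lemma one_div_pow_le_matProd_kSeq (hCS : ∀ t, ColStochastic (A t))
    (hOD : ∀ t, OutDegreeForm (A t)) (hflow : DirectedInfiniteFlow A) (p : ℕ) (i j : Fin n) :
    1 / (n : ℝ) ^ (kSeq A (p + n) - kSeq A p) ≤
      matProd A (kSeq A (p + n) - 1) (kSeq A p) i j := by
  set a := kSeq A p
  set b := kSeq A (p + n)
  have hab : a < b := kSeq_strictMono hflow (by have := i.pos; omega)
  set u : ℕ → Fin n → ℝ := fun t => pushIter (fun k => A (a + k)) (Pi.single j 1) (t - a)
  have hA : ∀ t i j, 0 ≤ A t i j := fun t => (hCS t).1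
  have hu : ∀ t, a ≤ t → u (t + 1) = A t *ᵥ u t := fun t ht => by
    simp only [u, show t + 1 - a = t - a + 1 by omega, pushIter, Nat.add_sub_cancel' ht]
  have hua : u a = Pi.single j 1 := by simp [u, pushIter]
  have hu₀ : 0 ≤ u a := hua ▸ Pi.single_nonneg.2 zero_le_one
  have hfull : posSupport (u b) = Finset.univ := by
    refine Finset.eq_univ_of_card _ (le_antisymm (Finset.card_le_univ _) ?_)
    simpa using min_le_card_posSupport_trajectory hA hu hu₀ (fun t => (hOD t).diag_pos)
      (c := fun r => kSeq A (p + r)) ((kSeq_strictMono hflow).monotone.comp fun _ _ h => by omega)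
      le_rfl (fun r => by simpa [add_assoc] using (kSeq_lt_succ_and_flowSum_pos hflow (p + r)).2)
      ⟨j, mem_posSupport.2 (show 0 < u a j by simp [hua])⟩ n
  have hub : u b = (matProd A (b - 1) a).col j := by
    simp only [u]
    rw [show b - a = b - 1 - a + 1 by omega, pushIter_shift_succ,
      show a + (b - 1 - a) = b - 1 by omega, Matrix.mulVec_single_one]
  have hu₁ : ∀ k, 0 < u a k → 1 ≤ u a k := fun k => by
    by_cases hk : k = j <;> simp [hua, hk]
  rw [← _root_.one_div_pow, ← Matrix.col_apply (matProd A (b - 1) a) j i, ← hub]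
  exact pow_le_trajectory_of_pos hA hu hu₀ (by positivity)
    (fun t _ _ h => (hOD t).one_div_le_of_pos h) hu₁ hab.le i (mem_posSupport.1 (hfull ▸ Finset.mem_univ i))

end FlowTimes

section Limits

open Filter Topology

lemma tendsto_prod_Ioc_one_sub_nhds_zero {x : ℕ → ℝ} (hx : ∀ q, x q ≤ 1)
    (hsum : Tendsto (fun Q => ∑ q ∈ Finset.Icc 1 Q, x q) atTop atTop) (m : ℕ) :
    Tendsto (fun Q => ∏ q ∈ Finset.Ioc m Q, (1 - x q)) atTop (𝓝 0) := by
  have htail : Tendsto (fun Q => ∑ q ∈ Finset.Ioc m Q, x q) atTop atTop := by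
    refine (tendsto_atTop_add_const_right _ (-∑ q ∈ Finset.Ioc 0 m, x q) hsum).congr' ?_
    filter_upwards [eventually_ge_atTop m] with Q hQ
    rw [show Finset.Icc 1 Q = Finset.Ioc 0 Q from Finset.Icc_add_one_left_eq_Ioc 0 Q,
      ← Finset.sum_Ioc_consecutive _ (Nat.zero_le m) hQ]
    ring
  refine squeeze_zero (fun Q => Finset.prod_nonneg fun q _ => sub_nonneg.2 (hx q)) (fun Q => ?_)
    (Real.tendsto_exp_atBot.comp (tendsto_neg_atTop_atBot.comp htail))
  calc ∏ q ∈ Finset.Ioc m Q, (1 - x q) ≤ ∏ q ∈ Finset.Ioc m Q, Real.exp (-x q) :=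
        Finset.prod_le_prod (fun q _ => sub_nonneg.2 (hx q))
          fun q _ => by linarith [Real.add_one_le_exp (-x q)]
    _ = Real.exp (-∑ q ∈ Finset.Ioc m Q, x q) := by
        rw [← Real.exp_sum, Finset.sum_neg_distrib]

lemma Antitone.tendsto_nhds_zero_of_comp {N : ℕ → ℝ} (hN : Antitone N) (hN₀ : 0 ≤ N)
    {b : ℕ → ℕ} (h : Tendsto (N ∘ b) atTop (𝓝 0)) : Tendsto N atTop (𝓝 0) := by
  refine tendsto_order.2 ⟨fun ε hε => .of_forall fun t => hε.trans_le (hN₀ t), fun ε hε => ?_⟩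
  obtain ⟨Q, hQ⟩ := (h.eventually (gt_mem_nhds hε)).exists
  filter_upwards [eventually_ge_atTop (b Q)] with t ht using (hN ht).trans_lt hQ

lemma tendsto_nhds_zero_of_antitone_of_le_one_sub_mul {N : ℕ → ℝ} (hN : Antitone N)
    (hN₀ : 0 ≤ N) {x : ℕ → ℝ} (hx : ∀ q, x q ≤ 1)
    (hsum : Tendsto (fun Q => ∑ q ∈ Finset.Icc 1 Q, x q) atTop atTop) {b : ℕ → ℕ} {m : ℕ}
    (hstep : ∀ Q, m ≤ Q → N (b (Q + 1)) ≤ (1 - x (Q + 1)) * N (b Q)) :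
    Tendsto N atTop (𝓝 0) := by
  have hprod : ∀ Q, m ≤ Q → N (b Q) ≤ (∏ q ∈ Finset.Ioc m Q, (1 - x q)) * N (b m) := by
    intro Q hQ
    induction Q, hQ using Nat.le_induction with
    | base => simp
    | succ Q hQ ih =>
      rw [Finset.prod_Ioc_succ_top hQ, mul_comm _ (1 - x (Q + 1)), mul_assoc]
      exact (hstep Q hQ).trans (mul_le_mul_of_nonneg_left ih (sub_nonneg.2 (hx _)))
  refine hN.tendsto_nhds_zero_of_comp hN₀ (b := b) <|
    squeeze_zero' (.of_forall fun Q => hN₀ _) ((eventually_ge_atTop m).mono hprod) ?_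
  simpa using (tendsto_prod_Ioc_one_sub_nhds_zero hx hsum m).mul_const (N (b m))

end Limits

section Contraction

open Filter Topology

variable {n : ℕ} {A : ℕ → Matrix (Fin n) (Fin n) ℝ}

lemma sum_abs_matProd_kSeq_mulVec_le (hn : 0 < n) (hCS : ∀ t, ColStochastic (A t))
    (hOD : ∀ t, OutDegreeForm (A t)) (hflow : DirectedInfiniteFlow A) {s p : ℕ}
    (hs : s < kSeq A p) {d : Fin n → ℝ} (hd : ∑ j, d j = 0) :
    ∑ i, |(matProd A (kSeq A (p + n) - 1) s *ᵥ d) i| ≤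
      (1 - 1 / (n : ℝ) ^ (kSeq A (p + n) - kSeq A p)) *
        ∑ i, |(matProd A (kSeq A p - 1) s *ᵥ d) i| := by
  have hab : kSeq A p < kSeq A (p + n) := kSeq_strictMono hflow (by omega)
  rw [matProd_split A hs (by omega), ← Matrix.mulVec_mulVec]
  set ε : ℝ := 1 / (n : ℝ) ^ (kSeq A (p + n) - kSeq A p)
  have hε : ε ≤ n * ε := le_mul_of_one_le_left (by positivity) (by exact_mod_cast hn)
  refine ((colStochastic_matProd hCS _ _).sum_abs_mulVec_le
    (one_div_pow_le_matProd_kSeq hCS hOD hflow p) ?_).trans ?_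
  · rw [(colStochastic_matProd hCS _ _).sum_mulVec, hd]
  · exact mul_le_mul_of_nonneg_right (by linarith) (Finset.sum_nonneg fun i _ => abs_nonneg _)

lemma tendsto_sum_abs_matProd_mulVec (hn : 0 < n) (hCS : ∀ t, ColStochastic (A t))
    (hOD : ∀ t, OutDegreeForm (A t)) (hflow : DirectedInfiniteFlow A)
    (hsum : Tendsto (fun Q => ∑ q ∈ Finset.Icc 1 Q, 1 / (n : ℝ) ^ (ellSeq A q)) atTop atTop)
    (s : ℕ) {d : Fin n → ℝ} (hd : ∑ j, d j = 0) :
    Tendsto (fun t => ∑ i, |(matProd A t s *ᵥ d) i|) atTop (𝓝 0) := by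
  have hsum₀ : ∀ t, ∑ i, (matProd A t s *ᵥ d) i = 0 := fun t =>
    ((colStochastic_matProd hCS t s).sum_mulVec d).trans hd
  have hanti : Antitone fun t => ∑ i, |(matProd A t s *ᵥ d) i| := by
    refine antitone_nat_of_succ_le fun t => ?_
    rcases lt_or_ge (t + 1) s with h | h
    · simp [matProd_of_lt A h, matProd_of_lt A (by omega : t < s)]
    · simpa [matProd_succ A h, ← Matrix.mulVec_mulVec] using
        (hCS (t + 1)).sum_abs_mulVec_le (ε := 0) (hCS (t + 1)).1 (hsum₀ t)
  refine tendsto_nhds_zero_of_antitone_of_le_one_sub_mul hanti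
    (fun t => Finset.sum_nonneg fun i _ => abs_nonneg _)
    (fun q => div_le_one_of_le₀ (one_le_pow₀ (by exact_mod_cast hn)) (by positivity)) hsum
    (b := fun Q => kSeq A (Q * n) - 1) (m := s + 1) fun Q hQ => ?_
  have hs : s < kSeq A (Q * n) :=
    (Nat.lt_of_lt_of_le (by omega) (Nat.le_mul_of_pos_right Q hn)).trans_le
      (kSeq_strictMono hflow).le_apply
  simpa [ellSeq, add_mul] using sum_abs_matProd_kSeq_mulVec_le hn hCS hOD hflow hs hd

end Contraction

theorem column_stochastic_limit_general {n : ℕ}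
    (A : ℕ → Matrix (Fin n) (Fin n) ℝ)
    (hCS : ∀ t, ColStochastic (A t))
    (hOD : ∀ t, OutDegreeForm (A t))
    (hflow : DirectedInfiniteFlow A)
    (hsum : Filter.Tendsto
      (fun Q => ∑ q ∈ Finset.Icc 1 Q, 1 / (n : ℝ) ^ (ellSeq A q))
      Filter.atTop Filter.atTop) :
    ∀ s : ℕ, ∃ φ : ℕ → Fin n → ℝ, ∀ i j,
      Filter.Tendsto (fun t => |matProd A t s i j - φ t i|)
        Filter.atTop (nhds 0) := by
  intro s
  refine ⟨fun t i => matProd A t s i i, fun i j => ?_⟩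
  set d : Fin n → ℝ := Pi.single j 1 - Pi.single i 1
  have hd : ∑ k, d k = 0 := by simp [d]
  refine squeeze_zero (fun t => abs_nonneg _) (fun t => ?_)
    (tendsto_sum_abs_matProd_mulVec i.pos hCS hOD hflow hsum s hd)
  calc |matProd A t s i j - matProd A t s i i| = |(matProd A t s *ᵥ d) i| := by
        simp [d, Matrix.mulVec_sub]
    _ ≤ ∑ k, |(matProd A t s *ᵥ d) k| :=
        Finset.single_le_sum (f := fun k => |(matProd A t s *ᵥ d) k|)
          (fun _ _ => abs_nonneg _) (Finset.mem_univ i)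

/-- Under the hypotheses of Statement 3, if `∑_q 1/n^{ℓ_q} = ∞`,
then `|[A(t:s)]_{ij} - φ_i(t)| → 0` as `t → ∞`. -/
theorem column_stochastic_limit {n : ℕ} (hn : 2 ≤ n)
    (A : ℕ → Matrix (Fin n) (Fin n) ℝ)
    (hCS : ∀ t, ColStochastic (A t))
    (hOD : ∀ t, OutDegreeForm (A t))
    (hAper : StronglyAperiodic A)
    (hflow : DirectedInfiniteFlow A)
    (hsum : Filter.Tendsto
      (fun Q => ∑ q ∈ Finset.Icc 1 Q, 1 / (n : ℝ) ^ (ellSeq A q))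
      Filter.atTop Filter.atTop) :
    ∀ s : ℕ, ∃ φ : ℕ → Fin n → ℝ, ∀ i j,
      Filter.Tendsto (fun t => |matProd A t s i j - φ t i|)
        Filter.atTop (nhds 0) :=
  column_stochastic_limit_general A hCS hOD hflow hsum
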